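/- arXiv:math/0507233 — 4 statements merged into one kernel-verified Lean document; each statement's English description precedes it below -/
import Mathlib

section
/- Let p ∈ ℂ[x] have degree exactly n ≥ 1, with distinct roots x_1, …, x_m of multiplicities k_1, …, k_m (so k_1 + … + k_m = n). Then the right kernel of the shift matrix T(p), i.e. { v ∈ ℂ^{2n} : T(p) v = 0 }, is exactly the linear span of the Vandermonde vectors { V_{2n}^{(l)}(x_j) : 1 ≤ j ≤ m, 0 ≤ l ≤ k_j − 1 }. -/
open Polynomial Matrix

namespace ShiftAux

/-- Two linear functionals agreeing on `X^s` for `s < N` agree on polynomials of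
`natDegree < N`. -/
lemma linmap_eq_of_agree (N : ℕ) (L1 L2 : Polynomial ℂ →ₗ[ℂ] ℂ)
    (h : ∀ s < N, L1 (X ^ s) = L2 (X ^ s)) {f : Polynomial ℂ} (hf : f.natDegree < N) :
    L1 f = L2 f := by
  rw [f.as_sum_range' N hf, map_sum, map_sum]
  refine Finset.sum_congr rfl fun i hi => ?_
  rw [Finset.mem_range] at hi
  rw [← smul_X_eq_monomial, _root_.map_smul, _root_.map_smul, h i hi]

lemma sum_g_mul_coeff_X_pow (N : ℕ) (g : Fin N → ℂ) (s : ℕ) (hs : s < N) :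
    ∑ t : Fin N, g t * (X ^ s : Polynomial ℂ).coeff t = g ⟨s, hs⟩ := by
  rw [Finset.sum_eq_single (⟨s, hs⟩ : Fin N)]
  · simp [coeff_X_pow]
  · intro b _ hb
    have : (b : ℕ) ≠ s := fun h => hb (Fin.ext h)
    simp [coeff_X_pow, this]
  · simp

lemma sum_coeff_X_pow_mul (N : ℕ) (g : Fin N → ℂ) (s : ℕ) (hs : s < N) :
    ∑ t : Fin N, g t * (X ^ (t : ℕ) : Polynomial ℂ).coeff s = g ⟨s, hs⟩ := by
  rw [Finset.sum_eq_single (⟨s, hs⟩ : Fin N)]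
  · simp [coeff_X_pow]
  · intro b _ hb
    have : s ≠ (b : ℕ) := fun h => hb (Fin.ext h.symm)
    simp [coeff_X_pow, this]
  · simp

lemma eval_iterate_derivative_eq_zero {x : ℂ} {K l : ℕ} {f : Polynomial ℂ}
    (hl : l < K) (hd : (X - C x) ^ K ∣ f) : (derivative^[l] f).eval x = 0 := by
  rcases eq_or_ne f 0 with rfl | hf
  · simp [Function.iterate_fixed (derivative_zero)]
  · have hK : K ≤ f.rootMultiplicity x := (le_rootMultiplicity_iff hf).2 hd
    exact isRoot_iterate_derivative_of_lt_rootMultiplicity (lt_of_lt_of_le hl hK)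

/-- Hermite interpolation uniqueness. -/
lemma hermite_zero {n m : ℕ} (x : Fin m → ℂ) (hx : Function.Injective x)
    (k : Fin m → ℕ) (hsum : ∑ j, k j = n) {f : Polynomial ℂ} (hdeg : f.natDegree < n)
    (hval : ∀ (s : (j : Fin m) × Fin (k j)), (derivative^[(s.2 : ℕ)] f).eval (x s.1) = 0) :
    f = 0 := by
  by_contra hf
  have hle : ∀ j, k j ≤ f.rootMultiplicity (x j) := by
    intro j
    rcases Nat.eq_zero_or_pos (k j) with h0 | h0
    · simp [h0]
    have : k j - 1 < f.rootMultiplicity (x j) := by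
      apply lt_rootMultiplicity_of_isRoot_iterate_derivative_of_mem_nonZeroDivisors' hf
      · intro l hl
        exact hval ⟨j, ⟨l, by omega⟩⟩
      · intro l _ hl0
        exact mem_nonZeroDivisors_of_ne_zero (by exact_mod_cast hl0)
    omega
  have hdvd : ∏ j, (X - C (x j)) ^ (k j) ∣ f := by
    apply Finset.prod_dvd_of_coprime
    · intro a _ b _ hab
      exact (pairwise_coprime_X_sub_C hx hab).pow
    · intro j _
      exact (le_rootMultiplicity_iff hf).1 (hle j)
  have hdd : n ≤ f.natDegree := by
    have h1 := Polynomial.natDegree_le_of_dvd hdvd hf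
    rw [natDegree_prod _ _ (fun j _ => pow_ne_zero _ (X_sub_C_ne_zero (x j)))] at h1
    simp only [natDegree_pow, natDegree_X_sub_C, mul_one] at h1
    omega
  omega

end ShiftAux



/-- The shift matrix `T(p)` of a polynomial `p` of degree ≤ n : the `n × 2n` matrix whose
`r`-th row is the coefficient vector of `x^r * p(x)`, i.e. `T(p)_{r,s} = p_{s-r}`
(interpreted as `0` when `s < r`). -/
noncomputable def shiftMatrix (n : ℕ) (p : Polynomial ℂ) : Matrix (Fin n) (Fin (2 * n)) ℂ :=
  Matrix.of fun r s => if (r : ℕ) ≤ (s : ℕ) then p.coeff ((s : ℕ) - (r : ℕ)) else 0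

/-- Let `p` have degree exactly `n ≥ 1`, with distinct roots
`x 1, …, x m` of multiplicities `k 1, …, k m` summing to `n`. Then the right kernel
`{v : T(p) v = 0}` equals the span of the higher-order Vandermonde vectors
`V_{2n}^{(l)}(x j)`, `1 ≤ j ≤ m`, `0 ≤ l ≤ k j − 1`. -/
theorem shiftMatrix_kernel_eq_span_vandermonde
    (n m : ℕ) (hn : 1 ≤ n) (p : Polynomial ℂ) (hdeg : p.natDegree = n)
    (x : Fin m → ℂ) (hx : Function.Injective x)
    (k : Fin m → ℕ) (hk1 : ∀ j, 1 ≤ k j)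
    (hmult : ∀ j, p.rootMultiplicity (x j) = k j)
    (hsum : ∑ j, k j = n) :
    {v : Fin (2 * n) → ℂ | (shiftMatrix n p).mulVec v = 0} =
      ↑(Submodule.span ℂ (Set.range (fun s : (j : Fin m) × Fin (k j) =>
        fun t : Fin (2 * n) =>
          (Polynomial.derivative^[(s.2 : ℕ)] (Polynomial.X ^ (t : ℕ))).eval (x s.1)))) := by
  classical
  open ShiftAux in
  set u : ((j : Fin m) × Fin (k j)) → Fin (2 * n) → ℂ := fun s =>
    fun t : Fin (2 * n) => (derivative^[(s.2 : ℕ)] (X ^ (t : ℕ) : Polynomial ℂ)).eval (x s.1)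
    with hu
  have hp0 : p ≠ 0 := fun h => by simp [h] at hdeg; omega
  -- divisibility of p by the root powers
  have hdvdp : ∀ j : Fin m, (X - C (x j)) ^ (k j) ∣ p := fun j =>
    (hmult j) ▸ p.pow_rootMultiplicity_dvd (x j)
  -- shiftMatrix entries as coefficients of `p * X^r`
  have hentry : ∀ (r : Fin n) (t : Fin (2 * n)),
      shiftMatrix n p r t = (p * X ^ (r : ℕ)).coeff t := by
    intro r t
    rw [coeff_mul_X_pow']
    rfl
  have hdegpr : ∀ r : Fin n, (p * X ^ (r : ℕ)).natDegree < 2 * n := by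
    intro r
    refine lt_of_le_of_lt (natDegree_mul_le) ?_
    rw [hdeg, natDegree_X_pow]
    omega
  -- `D^l` composed with evaluation, as a linear functional
  set Ld : ℂ → ℕ → (Polynomial ℂ →ₗ[ℂ] ℂ) := fun a l =>
    (leval a).comp ((derivative : Polynomial ℂ →ₗ[ℂ] Polynomial ℂ) ^ l) with hLd
  have hLdapp : ∀ (a : ℂ) (l : ℕ) (f : Polynomial ℂ),
      Ld a l f = (derivative^[l] f).eval a := by
    intro a l f
    simp [hLd, Module.End.pow_apply]
  -- the `⊇` half will need: for `f` of degree `< 2n`,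
  -- `∑ t, f.coeff t * u (j,l) t = (D^l f).eval (x j)`
  have hsum_u : ∀ (a : ℂ) (l : ℕ) (f : Polynomial ℂ), f.natDegree < 2 * n →
      ∑ t : Fin (2 * n), f.coeff t * (derivative^[l] (X ^ (t : ℕ) : Polynomial ℂ)).eval a
        = (derivative^[l] f).eval a := by
    intro a l f hf
    have := linmap_eq_of_agree (2 * n)
      (∑ t : Fin (2 * n),
        ((derivative^[l] (X ^ (t : ℕ) : Polynomial ℂ)).eval a) • lcoeff ℂ t)
      (Ld a l) ?_ hf
    · rw [← hLdapp a l f, ← this]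
      simp only [LinearMap.sum_apply, LinearMap.smul_apply, lcoeff_apply, smul_eq_mul]
      exact Finset.sum_congr rfl fun t _ => mul_comm _ _
    · intro s hs
      simp only [LinearMap.sum_apply, LinearMap.smul_apply, lcoeff_apply, smul_eq_mul]
      rw [hLdapp]
      exact sum_g_mul_coeff_X_pow (2 * n)
        (fun t => (derivative^[l] (X ^ (t : ℕ) : Polynomial ℂ)).eval a) s hs
  suffices hsub : LinearMap.ker ((shiftMatrix n p).mulVecLin)
      = Submodule.span ℂ (Set.range u) by
    ext v
    rw [Set.mem_setOf_eq, SetLike.mem_coe, ← hsub, LinearMap.mem_ker,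
      Matrix.mulVecLin_apply]
  apply le_antisymm
  · -- kernel ⊆ span
    intro v hv
    rw [LinearMap.mem_ker, Matrix.mulVecLin_apply] at hv
    -- the functional `Lv`
    set Lv : Polynomial ℂ →ₗ[ℂ] ℂ := ∑ t : Fin (2 * n), v t • lcoeff ℂ t with hLvdef
    have hLvapp : ∀ f, Lv f = ∑ t : Fin (2 * n), f.coeff t * v t := by
      intro f
      simp only [hLvdef, LinearMap.sum_apply, LinearMap.smul_apply, lcoeff_apply, smul_eq_mul]
      exact Finset.sum_congr rfl fun t _ => mul_comm _ _
    have hLvX : ∀ (s : ℕ) (hs : s < 2 * n), Lv (X ^ s) = v ⟨s, hs⟩ := by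
      intro s hs
      rw [hLvapp, ← sum_g_mul_coeff_X_pow (2 * n) v s hs]
      exact Finset.sum_congr rfl fun t _ => mul_comm _ _
    -- Lv kills p * X^r for r < n
    have hLvpr : ∀ r : Fin n, Lv (p * X ^ (r : ℕ)) = 0 := by
      intro r
      have := congrFun hv r
      rw [Pi.zero_apply] at this
      rw [hLvapp, ← this]
      simp only [Matrix.mulVec, dotProduct]
      exact Finset.sum_congr rfl fun t _ => by rw [hentry]
    -- Lv kills p * g for natDegree g < n
    have hLvmul : ∀ g : Polynomial ℂ, g.natDegree < n → Lv (p * g) = 0 := by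
      intro g hg
      have := linmap_eq_of_agree n (Lv.comp (LinearMap.mulLeft ℂ p)) 0 ?_ hg
      · simpa using this
      · intro s hs
        simp only [LinearMap.comp_apply, LinearMap.mulLeft_apply, LinearMap.zero_apply]
        exact hLvpr ⟨s, hs⟩
    -- the square generalized Vandermonde matrix
    set M : Matrix ((j : Fin m) × Fin (k j)) (Fin n) ℂ := fun s t =>
      (derivative^[(s.2 : ℕ)] (X ^ (t : ℕ) : Polynomial ℂ)).eval (x s.1) with hM
    have hcard : Fintype.card ((j : Fin m) × Fin (k j)) = n := by
      simp [Fintype.card_sigma, hsum]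
    have e : Fin n ≃ ((j : Fin m) × Fin (k j)) := (Fintype.equivFinOfCardEq hcard).symm
    set Nsq : Matrix (Fin n) (Fin n) ℂ := M.submatrix e id with hNsq
    have hdet : Nsq.det ≠ 0 := by
      intro hdet0
      obtain ⟨w, hw0, hw⟩ := Matrix.exists_mulVec_eq_zero_iff.2 hdet0
      set f : Polynomial ℂ := ∑ i : Fin n, w i • (X : Polynomial ℂ) ^ (i : ℕ) with hfdef
      have hfdeg : f.natDegree < n := by
        refine lt_of_le_of_lt (natDegree_sum_le_of_forall_le _ _ fun i _ => ?_) (show n - 1 < n by omega)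
        refine le_trans (natDegree_smul_le _ _) ?_
        rw [natDegree_X_pow]
        omega
      have hval : ∀ (s : (j : Fin m) × Fin (k j)),
          (derivative^[(s.2 : ℕ)] f).eval (x s.1) = 0 := by
        intro s
        have h1 := congrFun hw (e.symm s)
        rw [Pi.zero_apply] at h1
        simp only [Matrix.mulVec, dotProduct, hNsq, Matrix.submatrix_apply, id_eq,
          Equiv.apply_symm_apply] at h1
        have h2 : (derivative^[(s.2 : ℕ)] f).eval (x s.1)
            = ∑ i : Fin n, w i * (derivative^[(s.2 : ℕ)] (X ^ (i : ℕ) : Polynomial ℂ)).eval (x s.1) := by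
          rw [hfdef, iterate_derivative_sum, eval_finset_sum]
          exact Finset.sum_congr rfl fun i _ => by
            rw [iterate_derivative_smul, eval_smul, smul_eq_mul]
        rw [h2, ← h1]
        exact Finset.sum_congr rfl fun i _ => mul_comm _ _
      have := hermite_zero x hx k hsum hfdeg hval
      apply hw0
      funext i
      have hco : f.coeff (i : ℕ) = w i := by
        rw [hfdef]
        simp only [finset_sum_coeff, coeff_smul, smul_eq_mul]
        rw [sum_coeff_X_pow_mul n w i i.isLt]
      rw [Pi.zero_apply, ← hco, this]
      simp
    -- solve for the coefficients c
    have hdetT : (Nsq.transpose).det ≠ 0 := by rwa [Matrix.det_transpose]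
    have hsurj : Function.Surjective (Nsq.transpose).mulVec :=
      Matrix.mulVec_surjective_iff_isUnit.2 ((Matrix.isUnit_iff_isUnit_det _).2 hdetT.isUnit)
    obtain ⟨d, hd⟩ := hsurj (fun t : Fin n => v ⟨(t : ℕ), by omega⟩)
    set c : ((j : Fin m) × Fin (k j)) → ℂ := fun s => d (e.symm s) with hc
    have hcM : ∀ t : Fin n, ∑ s : (j : Fin m) × Fin (k j), c s * M s t = v ⟨(t : ℕ), by omega⟩ := by
      intro t
      have h1 := congrFun hd t
      simp only [Matrix.mulVec, dotProduct, Matrix.transpose_apply, hNsq,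
        Matrix.submatrix_apply, id_eq] at h1
      rw [← h1, ← Equiv.sum_comp e (fun s => c s * M s t)]
      exact Finset.sum_congr rfl fun i _ => by rw [hc]; simp [mul_comm]
    -- the functional Lc
    set Lc : Polynomial ℂ →ₗ[ℂ] ℂ :=
      ∑ s : (j : Fin m) × Fin (k j), c s • Ld (x s.1) (s.2 : ℕ) with hLcdef
    have hLcapp : ∀ f, Lc f
        = ∑ s : (j : Fin m) × Fin (k j), c s * (derivative^[(s.2 : ℕ)] f).eval (x s.1) := by
      intro f
      simp only [hLcdef, LinearMap.sum_apply, LinearMap.smul_apply, smul_eq_mul]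
      exact Finset.sum_congr rfl fun s _ => by rw [hLdapp]
    -- Lv and Lc agree on degree < n
    have hlow : ∀ f : Polynomial ℂ, f.natDegree < n → Lv f = Lc f := by
      intro f hf
      refine linmap_eq_of_agree n Lv Lc ?_ hf
      intro s hs
      rw [hLvX s (by omega), hLcapp]
      rw [← hcM ⟨s, hs⟩]
    -- Lc kills multiples of p (of any degree)
    have hLcmul : ∀ g : Polynomial ℂ, Lc (p * g) = 0 := by
      intro g
      rw [hLcapp]
      refine Finset.sum_eq_zero fun s _ => ?_
      rw [eval_iterate_derivative_eq_zero s.2.isLt ((hdvdp s.1).trans (dvd_mul_right _ _)),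
        mul_zero]
    -- monic normalization of p
    have hlc : p.leadingCoeff ≠ 0 := leadingCoeff_ne_zero.2 hp0
    set p' : Polynomial ℂ := p * C p.leadingCoeff⁻¹ with hp'def
    have hp'monic : p'.Monic := monic_mul_leadingCoeff_inv hp0
    have hp'deg : p'.natDegree = n := by
      rw [hp'def, natDegree_mul hp0 (by simpa using inv_ne_zero hlc), natDegree_C, hdeg, add_zero]
    have hp'fac : ∀ g : Polynomial ℂ, p' * g = p * (C p.leadingCoeff⁻¹ * g) := by
      intro g; rw [hp'def, mul_assoc]
    -- final pointwise identity
    have hfinal : v = ∑ s : (j : Fin m) × Fin (k j), c s • u s := by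
      funext t
      set q : Polynomial ℂ := X ^ (t : ℕ) /ₘ p' with hq
      set r : Polynomial ℂ := X ^ (t : ℕ) %ₘ p' with hr
      have hXt : (X : Polynomial ℂ) ^ (t : ℕ) = r + p' * q := (modByMonic_add_div _ p').symm
      have hrdeg : r.natDegree < n := by
        have := natDegree_modByMonic_lt (X ^ (t : ℕ) : Polynomial ℂ) hp'monic
          (fun h1 => by rw [h1, natDegree_one] at hp'deg; omega)
        rw [← hr] at this
        omega
      have hqdeg : q.natDegree < n := by
        rw [hq, natDegree_divByMonic _ hp'monic, natDegree_X_pow, hp'deg]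
        have := t.isLt
        omega
      have hcq : (C p.leadingCoeff⁻¹ * q).natDegree < n :=
        lt_of_le_of_lt (natDegree_C_mul_le _ _) hqdeg
      have h1 : v t = Lv (X ^ (t : ℕ)) := (hLvX (t : ℕ) t.isLt).symm
      have h2 : Lv (X ^ (t : ℕ)) = Lv r := by
        rw [hXt, map_add, hp'fac, hLvmul _ hcq, add_zero]
      have h3 : Lv r = Lc r := hlow r hrdeg
      have h4 : Lc r = Lc (X ^ (t : ℕ)) := by
        rw [hXt, map_add, hp'fac, hLcmul, add_zero]
      have h5 : Lc (X ^ (t : ℕ)) = ∑ s : (j : Fin m) × Fin (k j), c s * u s t := by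
        rw [hLcapp]
      rw [h1, h2, h3, h4, h5]
      simp
    rw [hfinal]
    exact Submodule.sum_mem _ fun s _ =>
      Submodule.smul_mem _ _ (Submodule.subset_span ⟨s, rfl⟩)
  · -- span ⊆ kernel
    rw [Submodule.span_le]
    rintro _ ⟨s, rfl⟩
    rw [SetLike.mem_coe, LinearMap.mem_ker, Matrix.mulVecLin_apply]
    funext r
    rw [Pi.zero_apply]
    simp only [Matrix.mulVec, dotProduct]
    calc ∑ t : Fin (2 * n), shiftMatrix n p r t * u s t
        = ∑ t : Fin (2 * n), (p * X ^ (r : ℕ)).coeff t *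
            (derivative^[(s.2 : ℕ)] (X ^ (t : ℕ) : Polynomial ℂ)).eval (x s.1) := by
          exact Finset.sum_congr rfl fun t _ => by rw [hentry]
      _ = (derivative^[(s.2 : ℕ)] (p * X ^ (r : ℕ))).eval (x s.1) :=
          hsum_u _ _ _ (hdegpr r)
      _ = 0 := eval_iterate_derivative_eq_zero s.2.isLt
          ((hdvdp s.1).trans (dvd_mul_right _ _))
end

section
/- Let n ≥ 1 and let p, q, f, g ∈ ℂ[x] have degree ≤ n. Then the following matrix identity holds between 2n × 2n complex matrices: S(p,q)^T · [[0, −B(f,g)], [B(f,g), 0]] · S(p,q) = S(f,g)^T · [[0, −B(p,q)], [B(p,q), 0]] · S(f,g), where [[0, −B], [B, 0]] denotes the 2n × 2n block matrix with n × n blocks 0, −B, B, 0. -/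
open Matrix

/-- The Sylvester matrix `S(p,q)` (with respect to degree `n`): the `2n × 2n` matrix
obtained by stacking `T(p)` on top of `T(q)`. -/
noncomputable def sylvesterMatrix (n : ℕ) (p q : Polynomial ℂ) :
    Matrix (Fin (2 * n)) (Fin (2 * n)) ℂ :=
  (Matrix.fromRows (shiftMatrix n p) (shiftMatrix n q)).submatrix
    (fun r => finSumFinEquiv.symm (Fin.cast (two_mul n) r)) id

/-- Reindexing of a `(Fin n ⊕ Fin n) × (Fin n ⊕ Fin n)` block matrix as a
`2n × 2n` matrix. -/
noncomputable def toSquare (n : ℕ) (M : Matrix (Fin n ⊕ Fin n) (Fin n ⊕ Fin n) ℂ) :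
    Matrix (Fin (2 * n)) (Fin (2 * n)) ℂ :=
  M.submatrix (fun r => finSumFinEquiv.symm (Fin.cast (two_mul n) r))
    (fun c => finSumFinEquiv.symm (Fin.cast (two_mul n) c))

open Polynomial

lemma biv_funext {A B : Polynomial (Polynomial ℂ)}
    (h : ∀ x y : ℂ, ((A.map (evalRingHom x)).eval y) = ((B.map (evalRingHom x)).eval y)) :
    A = B := by
  apply Polynomial.ext
  intro k
  apply Polynomial.funext
  intro x
  have h1 : A.map (evalRingHom x) = B.map (evalRingHom x) :=
    Polynomial.funext (fun y => h x y)
  have := congrArg (fun P => Polynomial.coeff P k) h1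
  simpa [Polynomial.coeff_map] using this

noncomputable def F (n : ℕ) (B : Matrix (Fin n) (Fin n) ℂ) : Polynomial (Polynomial ℂ) :=
  ∑ i : Fin n, ∑ j : Fin n, C (C (B i j) * X ^ (i : ℕ)) * X ^ (j : ℕ)

lemma map_mapC (x : ℂ) (p : Polynomial ℂ) : (p.map C).map (evalRingHom x) = p := by
  rw [Polynomial.map_map]
  refine (congrArg (fun φ => p.map φ) ?_).trans p.map_id
  ext a : 1
  simp

lemma bez_eq (n : ℕ) (p q : Polynomial ℂ) (B : Matrix (Fin n) (Fin n) ℂ)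
    (hB : ∀ x y : ℂ, p.eval x * q.eval y - q.eval x * p.eval y =
      ∑ i : Fin n, ∑ j : Fin n, B i j * x ^ (i:ℕ) * (x - y) * y ^ (j:ℕ)) :
    C p * (q.map C) - C q * (p.map C) = F n B * (C X - X) := by
  apply biv_funext
  intro x y
  have lhs : ((C p * (q.map C) - C q * (p.map C)).map (evalRingHom x)).eval y
      = p.eval x * q.eval y - q.eval x * p.eval y := by
    simp [Polynomial.map_mul, Polynomial.map_sub, map_mapC]
  rw [lhs, hB]
  simp only [F, Polynomial.map_sum, Polynomial.map_mul, Polynomial.map_sub, Polynomial.map_C,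
    Polynomial.map_pow, Polynomial.map_X, Polynomial.eval_finset_sum, eval_mul, eval_sub, coe_evalRingHom,
    eval_C, eval_pow, eval_X, Finset.sum_mul, eval_mul]
  apply Finset.sum_congr rfl; intro i _
  apply Finset.sum_congr rfl; intro j _
  ring

lemma bc_single (c : ℂ) (i j a b : ℕ) (u v : Polynomial ℂ) :
    ((((C (C c * X ^ i) * X ^ j) * (C u * v.map C)).coeff b).coeff a)
     = c * (if i ≤ a then u.coeff (a - i) else 0) * (if j ≤ b then v.coeff (b - j) else 0) := by
  have h : (C (C c * X ^ i) * X ^ j) * (C u * v.map C)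
      = C (C c * (u * X ^ i)) * (v.map C * X ^ j) := by
    simp only [_root_.map_mul]; ring
  rw [h, coeff_C_mul, coeff_mul_X_pow', coeff_map]
  by_cases h1 : j ≤ b <;> by_cases h2 : i ≤ a
  · rw [if_pos h1, if_pos h1, if_pos h2,
      mul_comm (C c * (u * X ^ i)) (C (v.coeff (b - j))), coeff_C_mul, coeff_C_mul,
      coeff_mul_X_pow', if_pos h2]
    ring
  · rw [if_pos h1, if_pos h1, if_neg h2,
      mul_comm (C c * (u * X ^ i)) (C (v.coeff (b - j))), coeff_C_mul, coeff_C_mul,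
      coeff_mul_X_pow', if_neg h2]
    ring
  all_goals simp [h1]

lemma entry_eq (n : ℕ) (p q : Polynomial ℂ) (B : Matrix (Fin n) (Fin n) ℂ)
    (a b : Fin (2 * n)) :
    ((sylvesterMatrix n p q)ᵀ * toSquare n (Matrix.fromBlocks 0 (-B) B 0) *
        sylvesterMatrix n p q) a b
      = ((F n B * (C q * p.map C - C p * q.map C)).coeff (b : ℕ)).coeff (a : ℕ) := by
  have hS : sylvesterMatrix n p q
      = (Matrix.fromRows (shiftMatrix n p) (shiftMatrix n q)).submatrix
        (⇑((finCongr (two_mul n)).trans finSumFinEquiv.symm)) id := rfl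
  have hT : toSquare n (Matrix.fromBlocks 0 (-B) B 0)
      = (Matrix.fromBlocks 0 (-B) B 0).submatrix
        (⇑((finCongr (two_mul n)).trans finSumFinEquiv.symm))
        (⇑((finCongr (two_mul n)).trans finSumFinEquiv.symm)) := rfl
  rw [hS, hT, Matrix.transpose_submatrix, Matrix.submatrix_mul_equiv,
    Matrix.submatrix_mul_equiv, Matrix.submatrix_id_id]
  rw [Matrix.mul_apply, Fintype.sum_sum_type]
  simp only [Matrix.mul_apply, Fintype.sum_sum_type, Matrix.transpose_apply,
    Matrix.fromBlocks_apply₁₁, Matrix.fromBlocks_apply₁₂, Matrix.fromBlocks_apply₂₁,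
    Matrix.fromBlocks_apply₂₂, Matrix.fromRows_apply_inl, Matrix.fromRows_apply_inr,
    Matrix.zero_apply, Matrix.neg_apply, zero_mul, mul_zero, add_zero, zero_add,
    Finset.sum_add_distrib, Finset.mul_sum, Finset.sum_mul]
  simp only [F, Finset.sum_mul, mul_sub, Polynomial.finset_sum_coeff, Polynomial.coeff_sub,
    bc_single, shiftMatrix, Matrix.of_apply, Finset.sum_const_zero, zero_add,
    Finset.sum_sub_distrib]
  simp only [add_zero, Finset.sum_mul]
  conv_lhs => rw [Finset.sum_comm]
  conv_lhs => rw [add_comm]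
  conv_lhs => rw [Finset.sum_comm]
  simp only [← Finset.sum_add_distrib, ← Finset.sum_sub_distrib]
  apply Finset.sum_congr rfl; intro i _
  apply Finset.sum_congr rfl; intro j _
  ring

/-- For `p, q, f, g` of degree ≤ n, with `B(p,q)`, `B(f,g)` the Bezout
matrices (characterized by the displayed identities),
`S(p,q)ᵀ ⬝ [[0, −B(f,g)], [B(f,g), 0]] ⬝ S(p,q) = S(f,g)ᵀ ⬝ [[0, −B(p,q)], [B(p,q), 0]] ⬝ S(f,g)`. -/
theorem sylvester_bezout_exchange_identity
    (n : ℕ) (hn : 1 ≤ n) (p q f g : Polynomial ℂ)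
    (hp : p.natDegree ≤ n) (hq : q.natDegree ≤ n)
    (hf : f.natDegree ≤ n) (hg : g.natDegree ≤ n)
    (Bpq Bfg : Matrix (Fin n) (Fin n) ℂ)
    (hBpq : ∀ x y : ℂ, p.eval x * q.eval y - q.eval x * p.eval y =
      ∑ i : Fin n, ∑ j : Fin n, Bpq i j * x ^ (i : ℕ) * (x - y) * y ^ (j : ℕ))
    (hBfg : ∀ x y : ℂ, f.eval x * g.eval y - g.eval x * f.eval y =
      ∑ i : Fin n, ∑ j : Fin n, Bfg i j * x ^ (i : ℕ) * (x - y) * y ^ (j : ℕ)) :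
    (sylvesterMatrix n p q)ᵀ * toSquare n (Matrix.fromBlocks 0 (-Bfg) Bfg 0) *
        sylvesterMatrix n p q =
      (sylvesterMatrix n f g)ᵀ * toSquare n (Matrix.fromBlocks 0 (-Bpq) Bpq 0) *
        sylvesterMatrix n f g := by

  have h1 := bez_eq n p q Bpq hBpq
  have h2 := bez_eq n f g Bfg hBfg
  have key : F n Bfg * (C q * p.map C - C p * q.map C)
      = F n Bpq * (C g * f.map C - C f * g.map C) := by
    rw [show C q * p.map C - C p * q.map C = -(F n Bpq * (C X - X)) by rw [← h1]; ring,
      show C g * f.map C - C f * g.map C = -(F n Bfg * (C X - X)) by rw [← h2]; ring]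
    ring
  ext a b
  rw [entry_eq, entry_eq, key]
end

section
/- Let n ≥ 1 and let p, q ∈ ℂ[x] have degree ≤ n. Then S(p,q)^T · [[0, −J_n], [J_n, 0]] · S(p,q) = [[0, B(p,q)], [−B(p,q), 0]], where J_n is the n × n anti-diagonal matrix with (J_n)_{ij} = 1 if i + j = n − 1 and 0 otherwise, and [[0, B], [−B, 0]] denotes the 2n × 2n block matrix with n × n blocks 0, B, −B, 0. -/
open Matrix

/-- The `n × n` anti-diagonal matrix `J_n`, with `(J_n)_{ij} = 1` iff `i + j = n − 1`. -/
noncomputable def antiDiagJ (n : ℕ) : Matrix (Fin n) (Fin n) ℂ :=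
  Matrix.of fun i j => if (i : ℕ) + (j : ℕ) = n - 1 then 1 else 0

open Polynomial in
/-- Coefficient of a polynomial at an integer index, zero for negative indices. -/
noncomputable def pcz (p : Polynomial ℂ) (k : ℤ) : ℂ :=
  if 0 ≤ k then p.coeff k.toNat else 0

/-- Extension of an `n × n` matrix to `ℤ × ℤ` indices, zero outside range. -/
noncomputable def Bex (n : ℕ) (B : Matrix (Fin n) (Fin n) ℂ) (a b : ℤ) : ℂ :=
  ∑ i : Fin n, ∑ j : Fin n, if a = (i : ℤ) ∧ b = (j : ℤ) then B i j else 0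

lemma Bex_apply (n : ℕ) (B : Matrix (Fin n) (Fin n) ℂ) (i j : Fin n) :
    Bex n B (i : ℤ) (j : ℤ) = B i j := by
  rw [Bex, Finset.sum_eq_single i]
  · rw [Finset.sum_eq_single j]
    · simp
    · intro j' _ hj'; rw [if_neg]; rintro ⟨-, h2⟩; exact hj' (by ext; omega)
    · simp
  · intro i' _ hi'
    apply Finset.sum_eq_zero; intro j' _
    rw [if_neg]; rintro ⟨h1, h2⟩; exact hi' (by ext; omega)
  · simp

lemma Bex_zero (n : ℕ) (B : Matrix (Fin n) (Fin n) ℂ) (a b : ℤ)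
    (h : ¬(0 ≤ a ∧ a < n ∧ 0 ≤ b ∧ b < n)) : Bex n B a b = 0 := by
  apply Finset.sum_eq_zero; intro i _
  apply Finset.sum_eq_zero; intro j _
  rw [if_neg]; rintro ⟨h1, h2⟩
  exact h ⟨by omega, by subst h1; exact_mod_cast Int.ofNat_lt.mpr i.isLt,
    by omega, by subst h2; exact_mod_cast Int.ofNat_lt.mpr j.isLt⟩

lemma shiftMatrix_apply (n : ℕ) (p : Polynomial ℂ) (r : Fin n) (s : Fin (2 * n)) :
    shiftMatrix n p r s = pcz p ((s : ℤ) - (r : ℤ)) := by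
  rw [shiftMatrix, Matrix.of_apply, pcz]
  by_cases h : (r : ℕ) ≤ (s : ℕ)
  · rw [if_pos h, if_pos (by omega)]
    congr 1; omega
  · rw [if_neg h, if_neg (by omega)]

open Polynomial in
lemma bivar (n : ℕ) (p q : Polynomial ℂ) (Bpq : Matrix (Fin n) (Fin n) ℂ)
    (hBpq : ∀ x y : ℂ, p.eval x * q.eval y - q.eval x * p.eval y =
      ∑ i : Fin n, ∑ j : Fin n, Bpq i j * x ^ (i : ℕ) * (x - y) * y ^ (j : ℕ)) :
    p.map C * C q - q.map C * C p
      = ∑ i : Fin n, ∑ j : Fin n,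
          C (C (Bpq i j) * X ^ (j : ℕ)) * (X ^ ((i : ℕ) + 1) - X ^ (i : ℕ) * C X) := by
  have h1 : ∀ y : ℂ, (p.map C * C q - q.map C * C p).map (evalRingHom y)
      = (∑ i : Fin n, ∑ j : Fin n,
          C (C (Bpq i j) * X ^ (j : ℕ)) * (X ^ ((i : ℕ) + 1) - X ^ (i : ℕ) * C X)).map
          (evalRingHom y) := by
    intro y
    apply Polynomial.funext
    intro x
    have hmapC : ∀ r : Polynomial ℂ, (r.map C).map (evalRingHom y) = r := by
      intro r
      ext k
      simp [Polynomial.coeff_map]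
    simp only [Polynomial.map_sub, Polynomial.map_mul, Polynomial.map_sum,
      Polynomial.map_pow, Polynomial.map_C, Polynomial.map_X, hmapC,
      coe_evalRingHom, eval_sub, eval_mul, eval_C, eval_pow, eval_X, eval_finset_sum]
    rw [hBpq x y]
    apply Finset.sum_congr rfl; intro i _
    apply Finset.sum_congr rfl; intro j _
    ring
  apply Polynomial.ext; intro a
  apply Polynomial.funext; intro y
  have := congrArg (fun r => Polynomial.coeff r a) (h1 y)
  simpa [Polynomial.coeff_map, Polynomial.finset_sum_coeff, eval_finset_sum] using this

open Polynomial in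
lemma keyNat (n : ℕ) (p q : Polynomial ℂ) (Bpq : Matrix (Fin n) (Fin n) ℂ)
    (hBpq : ∀ x y : ℂ, p.eval x * q.eval y - q.eval x * p.eval y =
      ∑ i : Fin n, ∑ j : Fin n, Bpq i j * x ^ (i : ℕ) * (x - y) * y ^ (j : ℕ))
    (a b : ℕ) :
    p.coeff a * q.coeff b - q.coeff a * p.coeff b
      = (∑ i : Fin n, ∑ j : Fin n, if a = (i : ℕ) + 1 ∧ b = (j : ℕ) then Bpq i j else 0)
      - (∑ i : Fin n, ∑ j : Fin n, if a = (i : ℕ) ∧ b = (j : ℕ) + 1 then Bpq i j else 0) := by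
  have h := congrArg (fun r => (Polynomial.coeff r a).coeff b) (bivar n p q Bpq hBpq)
  simp only [Polynomial.coeff_sub, Polynomial.coeff_mul_C, Polynomial.coeff_map,
    Polynomial.coeff_C_mul, Polynomial.finset_sum_coeff, Polynomial.coeff_X_pow] at h
  rw [h, ← Finset.sum_sub_distrib]
  apply Finset.sum_congr rfl; intro i _
  rw [← Finset.sum_sub_distrib]
  apply Finset.sum_congr rfl; intro j _
  have e1 : C (Bpq i j) * X ^ (j : ℕ) *
      ((if a = (i : ℕ) + 1 then 1 else 0) - (if a = (i : ℕ) then 1 else 0) * X)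
      = (if a = (i : ℕ) + 1 then C (Bpq i j) * X ^ (j : ℕ) else 0)
        - (if a = (i : ℕ) then C (Bpq i j) * X ^ ((j : ℕ) + 1) else 0) := by
    split_ifs <;> ring
  rw [e1, Polynomial.coeff_sub, apply_ite (fun r => Polynomial.coeff r b),
    apply_ite (fun r => Polynomial.coeff r b)]
  simp only [Polynomial.coeff_C_mul, Polynomial.coeff_X_pow, Polynomial.coeff_zero,
    mul_ite, mul_one, mul_zero, ite_and]

lemma keyInt (n : ℕ) (p q : Polynomial ℂ) (Bpq : Matrix (Fin n) (Fin n) ℂ)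
    (hBpq : ∀ x y : ℂ, p.eval x * q.eval y - q.eval x * p.eval y =
      ∑ i : Fin n, ∑ j : Fin n, Bpq i j * x ^ (i : ℕ) * (x - y) * y ^ (j : ℕ))
    (a b : ℤ) :
    pcz p a * pcz q b - pcz q a * pcz p b = Bex n Bpq (a - 1) b - Bex n Bpq a (b - 1) := by
  by_cases ha : 0 ≤ a
  · by_cases hb : 0 ≤ b
    · lift a to ℕ using ha with a'
      lift b to ℕ using hb with b'
      have hpa : ∀ r : Polynomial ℂ, ∀ k : ℕ, pcz r (k : ℤ) = r.coeff k := by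
        intro r k; simp [pcz]
      rw [hpa, hpa, hpa, hpa, keyNat n p q Bpq hBpq a' b']
      congr 1
      · rw [Bex]
        apply Finset.sum_congr rfl; intro i _
        apply Finset.sum_congr rfl; intro j _
        apply if_congr _ rfl rfl
        constructor <;> (rintro ⟨h1, h2⟩; constructor <;> omega)
      · rw [Bex]
        apply Finset.sum_congr rfl; intro i _
        apply Finset.sum_congr rfl; intro j _
        apply if_congr _ rfl rfl
        constructor <;> (rintro ⟨h1, h2⟩; constructor <;> omega)
    · rw [Bex_zero n Bpq _ _ (by omega), Bex_zero n Bpq _ _ (by omega)]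
      have h1 : pcz q b = 0 := by rw [pcz, if_neg (by omega)]
      have h2 : pcz p b = 0 := by rw [pcz, if_neg (by omega)]
      rw [h1, h2]; ring
  · rw [Bex_zero n Bpq _ _ (by omega), Bex_zero n Bpq _ _ (by omega)]
    have h1 : pcz q a = 0 := by rw [pcz, if_neg (by omega)]
    have h2 : pcz p a = 0 := by rw [pcz, if_neg (by omega)]
    rw [h1, h2]; ring

/-- For `p, q` of degree ≤ n with Bezout matrix `B(p,q)`:
`S(p,q)ᵀ ⬝ [[0, −J_n], [J_n, 0]] ⬝ S(p,q) = [[0, B(p,q)], [−B(p,q), 0]]`. -/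
theorem sylvester_J_identity
    (n : ℕ) (hn : 1 ≤ n) (p q : Polynomial ℂ)
    (hp : p.natDegree ≤ n) (hq : q.natDegree ≤ n)
    (Bpq : Matrix (Fin n) (Fin n) ℂ)
    (hBpq : ∀ x y : ℂ, p.eval x * q.eval y - q.eval x * p.eval y =
      ∑ i : Fin n, ∑ j : Fin n, Bpq i j * x ^ (i : ℕ) * (x - y) * y ^ (j : ℕ)) :
    (sylvesterMatrix n p q)ᵀ * toSquare n (Matrix.fromBlocks 0 (-(antiDiagJ n)) (antiDiagJ n) 0) *
        sylvesterMatrix n p q =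
      toSquare n (Matrix.fromBlocks 0 Bpq (-Bpq) 0) := by
  set E : Fin (2 * n) ≃ Fin n ⊕ Fin n := (finCongr (two_mul n)).trans finSumFinEquiv.symm with hE
  set T := shiftMatrix n p with hT
  set U := shiftMatrix n q with hU
  have h1 : sylvesterMatrix n p q = (Matrix.fromRows T U).submatrix ⇑E id := rfl
  have h2 : ∀ M : Matrix (Fin n ⊕ Fin n) (Fin n ⊕ Fin n) ℂ,
      toSquare n M = M.submatrix ⇑E ⇑E := fun _ => rfl
  rw [h1, h2, h2, Matrix.transpose_submatrix, Matrix.submatrix_mul_equiv,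
    Matrix.submatrix_mul_equiv, Matrix.submatrix_id_id]
  ext s s'
  simp only [Matrix.mul_apply, Fintype.sum_sum_type, Matrix.transpose_apply,
    Matrix.fromRows_apply_inl, Matrix.fromRows_apply_inr,
    Matrix.fromBlocks_apply₁₁, Matrix.fromBlocks_apply₁₂,
    Matrix.fromBlocks_apply₂₁, Matrix.fromBlocks_apply₂₂,
    Matrix.zero_apply, Matrix.neg_apply, mul_zero, zero_mul,
    Finset.sum_const_zero, add_zero, zero_add, Matrix.submatrix_apply, id_eq]
  -- collapse the antidiagonal sums
  have hJ : ∀ (f : Fin n → ℂ) (x : Fin n),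
      (∑ y : Fin n, f y * antiDiagJ n y x) = f x.rev := by
    intro f x
    rw [Finset.sum_eq_single x.rev]
    · rw [antiDiagJ, Matrix.of_apply, if_pos (by have := x.isLt; rw [Fin.val_rev]; omega),
        mul_one]
    · intro y _ hy
      rw [antiDiagJ, Matrix.of_apply, if_neg, mul_zero]
      intro hc
      exact hy (by have := x.isLt; have := y.isLt; ext; rw [Fin.val_rev]; omega)
    · simp
  have hLHS : (∑ x : Fin n, (∑ y : Fin n, U y s * antiDiagJ n y x) * T x s') +
      (∑ x : Fin n, (∑ y : Fin n, T y s * -antiDiagJ n y x) * U x s')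
      = ∑ x : Fin n, (U x.rev s * T x s' - T x.rev s * U x s') := by
    rw [← Finset.sum_add_distrib]
    apply Finset.sum_congr rfl; intro x _
    have hneg : (∑ y : Fin n, T y s * -antiDiagJ n y x) = -(T x.rev s) := by
      have : ∀ y : Fin n, T y s * -antiDiagJ n y x = -(T y s * antiDiagJ n y x) := by
        intro y; ring
      rw [Finset.sum_congr rfl fun y _ => this y, Finset.sum_neg_distrib, hJ]
    rw [hJ, hneg]; ring
  rw [hLHS]
  rw [show (∑ x : Fin n, (U x.rev s * T x s' - T x.rev s * U x s'))
      = ∑ x : Fin n, (U x s * T x.rev s' - T x s * U x.rev s') from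
    Fintype.sum_equiv Fin.revPerm _ _ (by intro x; simp)]
  -- rewrite entries via pcz and apply the key identity; telescope
  have hterm : ∀ x : Fin n,
      U x s * T x.rev s' - T x s * U x.rev s'
      = Bex n Bpq ((s : ℤ) - ((x : ℕ) : ℤ)) ((s' : ℤ) - n + ((x : ℕ) : ℤ))
        - Bex n Bpq ((s : ℤ) - (((x : ℕ) + 1 : ℕ) : ℤ)) ((s' : ℤ) - n + (((x : ℕ) + 1 : ℕ) : ℤ)) := by
    intro x
    rw [hT, hU, shiftMatrix_apply, shiftMatrix_apply, shiftMatrix_apply, shiftMatrix_apply]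
    have hrev : ((x.rev : ℕ) : ℤ) = (n : ℤ) - 1 - (x : ℕ) := by
      have := x.isLt; rw [Fin.val_rev]; omega
    rw [hrev]
    have this2 := keyInt n p q Bpq hBpq ((s : ℤ) - ((x : ℕ) : ℤ)) ((s' : ℤ) - ((n : ℤ) - 1 - (x : ℕ)))
    have goal2 : pcz q ((s:ℤ) - (x:ℕ)) * pcz p ((s':ℤ) - ((n:ℤ) - 1 - (x:ℕ)))
        - pcz p ((s:ℤ) - (x:ℕ)) * pcz q ((s':ℤ) - ((n:ℤ) - 1 - (x:ℕ)))
        = -(pcz p ((s:ℤ) - (x:ℕ)) * pcz q ((s':ℤ) - ((n:ℤ) - 1 - (x:ℕ)))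
            - pcz q ((s:ℤ) - (x:ℕ)) * pcz p ((s':ℤ) - ((n:ℤ) - 1 - (x:ℕ)))) := by ring
    rw [goal2, this2, neg_sub]
    congr 2 <;> push_cast <;> ring
  rw [Finset.sum_congr rfl fun x _ => hterm x]
  -- telescope
  have htel : (∑ x : Fin n,
      (Bex n Bpq ((s : ℤ) - ((x : ℕ) : ℤ)) ((s' : ℤ) - n + ((x : ℕ) : ℤ))
        - Bex n Bpq ((s : ℤ) - (((x : ℕ) + 1 : ℕ) : ℤ)) ((s' : ℤ) - n + (((x : ℕ) + 1 : ℕ) : ℤ))))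
      = Bex n Bpq (s : ℤ) ((s' : ℤ) - n) - Bex n Bpq ((s : ℤ) - n) (s' : ℤ) := by
    have := Finset.sum_range_sub'
      (f := fun k : ℕ => Bex n Bpq ((s : ℤ) - (k : ℤ)) ((s' : ℤ) - n + (k : ℤ))) (n := n)
    rw [Fin.sum_univ_eq_sum_range
      (fun k => Bex n Bpq ((s : ℤ) - (k : ℤ)) ((s' : ℤ) - n + (k : ℤ))
        - Bex n Bpq ((s : ℤ) - ((k + 1 : ℕ) : ℤ)) ((s' : ℤ) - n + ((k + 1 : ℕ) : ℤ))), this]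
    norm_num
  rw [htel]
  -- case analysis on which block we are in
  have hs2 : (s : ℕ) < 2 * n := s.isLt
  have hs'2 : (s' : ℕ) < 2 * n := s'.isLt
  by_cases hs : (s : ℕ) < n
  · have hEs : E s = Sum.inl ⟨(s : ℕ), hs⟩ := by
      show finSumFinEquiv.symm (Fin.cast (two_mul n) s) = _
      rw [show Fin.cast (two_mul n) s = Fin.castAdd n ⟨(s : ℕ), hs⟩ from by ext; simp]
      exact finSumFinEquiv_symm_apply_castAdd _
    by_cases hs' : (s' : ℕ) < n
    · have hEs' : E s' = Sum.inl ⟨(s' : ℕ), hs'⟩ := by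
        show finSumFinEquiv.symm (Fin.cast (two_mul n) s') = _
        rw [show Fin.cast (two_mul n) s' = Fin.castAdd n ⟨(s' : ℕ), hs'⟩ from by ext; simp]
        exact finSumFinEquiv_symm_apply_castAdd _
      rw [hEs, hEs', Matrix.fromBlocks_apply₁₁,
        Bex_zero n Bpq _ _ (by push_cast; omega), Bex_zero n Bpq _ _ (by push_cast; omega)]
      simp
    · have hEs' : E s' = Sum.inr ⟨(s' : ℕ) - n, by omega⟩ := by
        show finSumFinEquiv.symm (Fin.cast (two_mul n) s') = _
        rw [show Fin.cast (two_mul n) s' = Fin.natAdd n ⟨(s' : ℕ) - n, by omega⟩ from by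
          ext; simp; omega]
        exact finSumFinEquiv_symm_apply_natAdd _
      rw [hEs, hEs', Matrix.fromBlocks_apply₁₂,
        Bex_zero n Bpq ((s : ℤ) - n) _ (by push_cast; omega)]
      have key2 : Bex n Bpq (s : ℤ) ((s' : ℤ) - n)
          = Bpq ⟨(s : ℕ), hs⟩ ⟨(s' : ℕ) - n, by omega⟩ := by
        have h := Bex_apply n Bpq ⟨(s : ℕ), hs⟩ ⟨(s' : ℕ) - n, by omega⟩
        convert h using 2 <;> simp <;> omega
      rw [key2]; ring
  · have hEs : E s = Sum.inr ⟨(s : ℕ) - n, by omega⟩ := by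
      show finSumFinEquiv.symm (Fin.cast (two_mul n) s) = _
      rw [show Fin.cast (two_mul n) s = Fin.natAdd n ⟨(s : ℕ) - n, by omega⟩ from by
        ext; simp; omega]
      exact finSumFinEquiv_symm_apply_natAdd _
    by_cases hs' : (s' : ℕ) < n
    · have hEs' : E s' = Sum.inl ⟨(s' : ℕ), hs'⟩ := by
        show finSumFinEquiv.symm (Fin.cast (two_mul n) s') = _
        rw [show Fin.cast (two_mul n) s' = Fin.castAdd n ⟨(s' : ℕ), hs'⟩ from by ext; simp]
        exact finSumFinEquiv_symm_apply_castAdd _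
      rw [hEs, hEs', Matrix.fromBlocks_apply₂₁,
        Bex_zero n Bpq (s : ℤ) _ (by push_cast; omega)]
      have key2 : Bex n Bpq ((s : ℤ) - n) (s' : ℤ)
          = Bpq ⟨(s : ℕ) - n, by omega⟩ ⟨(s' : ℕ), hs'⟩ := by
        have h := Bex_apply n Bpq ⟨(s : ℕ) - n, by omega⟩ ⟨(s' : ℕ), hs'⟩
        convert h using 2 <;> simp <;> omega
      rw [key2]; simp
    · have hEs' : E s' = Sum.inr ⟨(s' : ℕ) - n, by omega⟩ := by
        show finSumFinEquiv.symm (Fin.cast (two_mul n) s') = _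
        rw [show Fin.cast (two_mul n) s' = Fin.natAdd n ⟨(s' : ℕ) - n, by omega⟩ from by
          ext; simp; omega]
        exact finSumFinEquiv_symm_apply_natAdd _
      rw [hEs, hEs', Matrix.fromBlocks_apply₂₂,
        Bex_zero n Bpq (s : ℤ) _ (by push_cast; omega),
        Bex_zero n Bpq _ (s' : ℤ) (by push_cast; omega)]
      simp
end

section
/- Let n ≥ 1 and let p_0, p_1, p_2 ∈ ℂ[x_0, x_1] be homogeneous polynomials of degree n. Let B_{12}, B_{20}, B_{01} be n × n complex matrices such that for each cyclic pair, p_1(x)p_2(y) − p_2(x)p_1(y) = Σ_{i,j=0}^{n−1} (B_{12})_{ij} x_0^{n−1−i} x_1^i (x_1 y_0 − x_0 y_1) y_0^{n−1−j} y_1^j for all x = (x_0,x_1), y = (y_0,y_1) ∈ ℂ², and similarly p_2 p_0 with B_{20} and p_0 p_1 with B_{01}. Then for every (x_0, x_1) ∈ ℂ², det( p_0(x_0,x_1) · B_{12} + p_1(x_0,x_1) · B_{20} + p_2(x_0,x_1) · B_{01} ) = 0; that is, every point (p_0(x), p_1(x), p_2(x)) in the image of the rational transformation r = (p_0, p_1,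 p_2) lies on the curve det(t_0 B_{12} + t_1 B_{20} + t_2 B_{01}) = 0. -/
open Matrix

/-- Let `p₀, p₁, p₂` be homogeneous binary forms of degree `n ≥ 1` and
let `B₁₂, B₂₀, B₀₁` be (homogeneous) Bezout matrices of the cyclic pairs
`(p₁,p₂)`, `(p₂,p₀)`, `(p₀,p₁)`.  Then every point `(p₀(x), p₁(x), p₂(x))` in the image
of the rational transformation `r = (p₀, p₁, p₂)` lies on the determinantal curve:
`det(p₀(x)·B₁₂ + p₁(x)·B₂₀ + p₂(x)·B₀₁) = 0` for all `x = (x₀,x₁) ∈ ℂ²`. -/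
theorem image_of_line_on_bezout_determinantal_curve
    (n : ℕ) (hn : 1 ≤ n) (p₀ p₁ p₂ : MvPolynomial (Fin 2) ℂ)
    (h₀ : p₀.IsHomogeneous n) (h₁ : p₁.IsHomogeneous n) (h₂ : p₂.IsHomogeneous n)
    (B12 B20 B01 : Matrix (Fin n) (Fin n) ℂ)
    (hB12 : ∀ x₀ x₁ y₀ y₁ : ℂ,
      MvPolynomial.eval ![x₀, x₁] p₁ * MvPolynomial.eval ![y₀, y₁] p₂ -
          MvPolynomial.eval ![x₀, x₁] p₂ * MvPolynomial.eval ![y₀, y₁] p₁ =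
        ∑ i : Fin n, ∑ j : Fin n, B12 i j * (x₀ ^ (n - 1 - (i : ℕ)) * x₁ ^ (i : ℕ)) *
          (x₁ * y₀ - x₀ * y₁) * (y₀ ^ (n - 1 - (j : ℕ)) * y₁ ^ (j : ℕ)))
    (hB20 : ∀ x₀ x₁ y₀ y₁ : ℂ,
      MvPolynomial.eval ![x₀, x₁] p₂ * MvPolynomial.eval ![y₀, y₁] p₀ -
          MvPolynomial.eval ![x₀, x₁] p₀ * MvPolynomial.eval ![y₀, y₁] p₂ =
        ∑ i : Fin n, ∑ j : Fin n, B20 i j * (x₀ ^ (n - 1 - (i : ℕ)) * x₁ ^ (i : ℕ)) *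
          (x₁ * y₀ - x₀ * y₁) * (y₀ ^ (n - 1 - (j : ℕ)) * y₁ ^ (j : ℕ)))
    (hB01 : ∀ x₀ x₁ y₀ y₁ : ℂ,
      MvPolynomial.eval ![x₀, x₁] p₀ * MvPolynomial.eval ![y₀, y₁] p₁ -
          MvPolynomial.eval ![x₀, x₁] p₁ * MvPolynomial.eval ![y₀, y₁] p₀ =
        ∑ i : Fin n, ∑ j : Fin n, B01 i j * (x₀ ^ (n - 1 - (i : ℕ)) * x₁ ^ (i : ℕ)) *
          (x₁ * y₀ - x₀ * y₁) * (y₀ ^ (n - 1 - (j : ℕ)) * y₁ ^ (j : ℕ))) :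
    ∀ x₀ x₁ : ℂ,
      Matrix.det (MvPolynomial.eval ![x₀, x₁] p₀ • B12 + MvPolynomial.eval ![x₀, x₁] p₁ • B20 +
        MvPolynomial.eval ![x₀, x₁] p₂ • B01) = 0 := by
  intro x₀ x₁
  haveI : NeZero n := ⟨by omega⟩
  set e₀ := MvPolynomial.eval ![x₀, x₁] p₀ with he₀
  set e₁ := MvPolynomial.eval ![x₀, x₁] p₁ with he₁
  set e₂ := MvPolynomial.eval ![x₀, x₁] p₂ with he₂
  by_cases hx : x₀ = 0 ∧ x₁ = 0
  · obtain ⟨hx0, hx1⟩ := hx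
    have hzero : ∀ p : MvPolynomial (Fin 2) ℂ, p.IsHomogeneous n →
        MvPolynomial.eval ![x₀, x₁] p = 0 := by
      intro p hp
      have : ![x₀, x₁] = (0 : Fin 2 → ℂ) := by
        funext i; fin_cases i <;> simp [hx0, hx1]
      rw [this]
      have := hp.coeff_eq_zero (d := 0) (by simpa using by omega)
      simpa [MvPolynomial.eval_zero', MvPolynomial.constantCoeff_eq] using this
    rw [he₀, he₁, he₂, hzero p₀ h₀, hzero p₁ h₁, hzero p₂ h₂]
    simp
  · set M := e₀ • B12 + e₁ • B20 + e₂ • B01 with hM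
    set w : Fin n → ℂ := fun i => x₀ ^ (n - 1 - (i : ℕ)) * x₁ ^ (i : ℕ) with hw
    set c : Fin n → ℂ := fun j => ∑ i, w i * M i j with hc
    have key : ∀ y₀ y₁ : ℂ, (x₁ * y₀ - x₀ * y₁) *
        ∑ j : Fin n, c j * (y₀ ^ (n - 1 - (j : ℕ)) * y₁ ^ (j : ℕ)) = 0 := by
      intro y₀ y₁
      have comb : e₀ * (e₁ * MvPolynomial.eval ![y₀, y₁] p₂ - e₂ * MvPolynomial.eval ![y₀, y₁] p₁)
          + e₁ * (e₂ * MvPolynomial.eval ![y₀, y₁] p₀ - e₀ * MvPolynomial.eval ![y₀, y₁] p₂)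
          + e₂ * (e₀ * MvPolynomial.eval ![y₀, y₁] p₁ - e₁ * MvPolynomial.eval ![y₀, y₁] p₀)
          = 0 := by ring
      rw [hB12 x₀ x₁ y₀ y₁, hB20 x₀ x₁ y₀ y₁, hB01 x₀ x₁ y₀ y₁] at comb
      rw [← comb]
      simp only [hc, hM, Matrix.add_apply, Matrix.smul_apply, smul_eq_mul, Finset.mul_sum,
        Finset.sum_mul]
      rw [Finset.sum_comm, ← Finset.sum_add_distrib, ← Finset.sum_add_distrib]
      refine Finset.sum_congr rfl fun i _ => ?_
      rw [← Finset.sum_add_distrib, ← Finset.sum_add_distrib]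
      refine Finset.sum_congr rfl fun j _ => ?_
      simp only [hw]
      ring
    -- turn key into c = 0
    have hc0 : ∀ j, c j = 0 := by
      set P : Polynomial ℂ := ∑ j : Fin n, Polynomial.C (c j) * Polynomial.X ^ (j : ℕ) with hP
      have hQ : (Polynomial.C x₁ - Polynomial.C x₀ * Polynomial.X) * P = 0 := by
        apply Polynomial.funext
        intro t
        have := key 1 t
        simpa [hP, Polynomial.eval_finset_sum, Finset.mul_sum] using this
      have hfac : (Polynomial.C x₁ - Polynomial.C x₀ * Polynomial.X) ≠ 0 := by
        intro h
        rcases not_and_or.mp hx with h0 | h1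
        · have := congrArg (Polynomial.coeff · 1) h
          simp at this; exact h0 this
        · have := congrArg (Polynomial.coeff · 0) h
          simp at this; exact h1 this
      have hP0 : P = 0 := by
        rcases mul_eq_zero.mp hQ with h | h
        · exact absurd h hfac
        · exact h
      intro j
      have := congrArg (Polynomial.coeff · (j : ℕ)) hP0
      simp only [hP, Polynomial.finset_sum_coeff, Polynomial.coeff_C_mul,
        Polynomial.coeff_X_pow, Polynomial.coeff_zero, mul_ite, mul_one, mul_zero] at this
      simp only [Fin.val_eq_val] at this
      rwa [Finset.sum_ite_eq, if_pos (Finset.mem_univ j)] at this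
    have hwvM : w ᵥ* M = 0 := by
      funext j
      simpa [Matrix.vecMul, dotProduct, hc] using hc0 j
    have hwne : w ≠ 0 := by
      rcases not_and_or.mp hx with h0 | h1
      · intro h
        have h' : x₀ ^ (n - 1 - (0 : ℕ)) * x₁ ^ (0 : ℕ) = (0 : ℂ) :=
          congrFun h ⟨0, by omega⟩
        rw [Nat.sub_zero, pow_zero, mul_one] at h'
        exact pow_ne_zero (n - 1) h0 h'
      · intro h
        have h' : x₀ ^ (n - 1 - (n - 1)) * x₁ ^ (n - 1) = (0 : ℂ) :=
          congrFun h ⟨n - 1, by omega⟩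
        rw [Nat.sub_self, pow_zero, one_mul] at h'
        exact pow_ne_zero (n - 1) h1 h'
    exact Matrix.exists_vecMul_eq_zero_iff.mp ⟨w, hwne, hwvM⟩
end
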